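/- Let f be a Boolean network of dimension n and ⟨f⟩ its interval-semantics encoding. For every i ∈ {1,…,n}, (2i−1, 2i−1) is never a negative edge of G(⟨f⟩), i.e. there is no negative self-loop on the node 2i−1 in the influence graph of ⟨f⟩. -/

import Mathlib

/-- Asynchronous transition relation of a Boolean network `f`:
`x → y` iff exactly one component `i` differs and `y i = f i x`. -/
def asyncStep {ι : Type} (f : ι → (ι → Bool) → Bool) (x y : ι → Bool) : Prop :=
  ∃ i : ι, x i ≠ y i ∧ (∀ j : ι, j ≠ i → x j = y j) ∧ y i = f i x

/-- Index of the "write" node `2i-1` (0-indexed: `2i`). -/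
def wIdx {n : ℕ} (i : Fin n) : Fin (2 * n) := ⟨2 * i.val, by have := i.isLt; omega⟩

/-- Index of the "read" node `2i` (0-indexed: `2i+1`). -/
def rIdx {n : ℕ} (i : Fin n) : Fin (2 * n) := ⟨2 * i.val + 1, by have := i.isLt; omega⟩

/-- `γ : 𝔹^{2n} → 𝔹^n`, projection on read nodes. -/
def gam {n : ℕ} (z : Fin (2 * n) → Bool) : Fin n → Bool := fun i => z (rIdx i)

/-- `α : 𝔹^n → 𝔹^{2n}`, consistent configuration. -/
def alph {n : ℕ} (x : Fin n → Bool) : Fin (2 * n) → Bool :=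
  fun k => x ⟨k.val / 2, by have := k.isLt; omega⟩

/-- Interval-semantics encoding `⟨f⟩` of a Boolean network `f`. -/
def encode {n : ℕ} (f : Fin n → (Fin n → Bool) → Bool) :
    Fin (2 * n) → (Fin (2 * n) → Bool) → Bool := fun k z =>
  let i : Fin n := ⟨k.val / 2, by have := k.isLt; omega⟩
  if k.val % 2 = 0 then
    (f i (gam z) && (!(z (rIdx i)) || z (wIdx i))) || (!(z (rIdx i)) && z (wIdx i))
  else
    z (wIdx i)

/-- Positive edge `(j,i)` of the influence graph `G(f)`. -/
def posEdge {ι : Type} (f : ι → (ι → Bool) → Bool) (j i : ι) : Prop :=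
  ∃ x y : ι → Bool, (∀ k : ι, k ≠ j → x k = y k) ∧ x j = false ∧ y j = true ∧
    f i x = false ∧ f i y = true

/-- Negative edge `(j,i)` of the influence graph `G(f)`. -/
def negEdge {ι : Type} (f : ι → (ι → Bool) → Bool) (j i : ι) : Prop :=
  ∃ x y : ι → Bool, (∀ k : ι, k ≠ j → x k = y k) ∧ x j = false ∧ y j = true ∧
    f i x = true ∧ f i y = false

/-! The write node `2i-1` updates by `(f_i(γ z) ∧ (¬r ∨ w)) ∨ (¬r ∧ w)`, where `w = z_{2i-1}` and
`r = z_{2i}`. Since `γ z` reads only the read nodes, flipping `w` leaves `f_i(γ z)` and `r`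
unchanged, and for fixed `r` the update is `f_i(γ z) ∨ w` (`r = 0`) or `f_i(γ z) ∧ w` (`r = 1`):
monotone in `w`, so `w` cannot inhibit itself. -/

theorem not_negEdge_of_monotone {ι : Type} {f : ι → (ι → Bool) → Bool} {j i : ι}
    (hmono : ∀ x y : ι → Bool, (∀ k, k ≠ j → x k = y k) → x j = false → y j = true →
      f i x ≤ f i y) :
    ¬ negEdge f j i := by
  rintro ⟨x, y, hxy, hxj, hyj, hfx, hfy⟩
  have hle := hmono x y hxy hxj hyj
  rw [hfx, hfy] at hle
  exact absurd hle (by decide)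

theorem rIdx_ne_wIdx {n : ℕ} (j i : Fin n) : rIdx j ≠ wIdx i := by
  simp only [rIdx, wIdx, ne_eq, Fin.mk.injEq]
  omega

theorem gam_eq_of_forall_ne_wIdx {n : ℕ} {x y : Fin (2 * n) → Bool} {i : Fin n}
    (hxy : ∀ k, k ≠ wIdx i → x k = y k) : gam x = gam y :=
  funext fun j => hxy _ (rIdx_ne_wIdx j i)

theorem encode_wIdx {n : ℕ} (f : Fin n → (Fin n → Bool) → Bool) (i : Fin n)
    (z : Fin (2 * n) → Bool) :
    encode f (wIdx i) z =
      ((f i (gam z) && (!(z (rIdx i)) || z (wIdx i))) || (!(z (rIdx i)) && z (wIdx i))) := by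
  simp [encode, wIdx]

theorem monotone_intervalUpdate (a r : Bool) :
    Monotone fun w : Bool => (a && (!r || w)) || (!r && w) := by
  cases a <;> cases r <;> decide

/-- there is never a negative self-loop on `2i−1` in `G(⟨f⟩)`. -/
theorem no_neg_selfloop {n : ℕ} (f : Fin n → (Fin n → Bool) → Bool) (i : Fin n) :
    ¬ negEdge (encode f) (wIdx i) (wIdx i) := by
  refine not_negEdge_of_monotone fun x y hxy hx hy => ?_
  have hgam : gam x = gam y := gam_eq_of_forall_ne_wIdx hxy
  have hread : x (rIdx i) = y (rIdx i) := hxy _ (rIdx_ne_wIdx i i)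
  rw [encode_wIdx, encode_wIdx, hgam, hread, hx, hy]
  exact monotone_intervalUpdate _ _ (Bool.false_le true)
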